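/- Let F : ℝ → ℂ be defined by F(x) = ∫_{{(ξ₁,ξ₂,ξ₃) : −1<ξ₁<ξ₂<ξ₃<1}} e^{2πix(ξ₁+ξ₂−2ξ₃)} dξ₁dξ₂dξ₃. Then for every r with 0 < r ≤ 1/2, F does not belong to L^r(ℝ), i.e. ∫_ℝ |F(x)|^r dx = ∞. -/

import Mathlib

/-!
Fubini writes `F x` as an iterated integral over `-1 < a < b < c < 1`, whose three exponential
integrals can be done in closed form: with `u = 2πix` and `w = e^{-2u}`,
`F x = 1/u² - (3 - 4w + w²)/(4u³)`. Since `|w| = 1`, the first term dominates, so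
`|F x| ≥ c/x²` for `x ≥ 1`, and `|F|^r ≥ c^r/x` there when `r ≤ 1/2`, which is not integrable.
-/

open MeasureTheory

/-- `F(x) = ∫_{−1<ξ₁<ξ₂<ξ₃<1} e^{2πix(ξ₁+ξ₂−2ξ₃)} dξ`. -/
noncomputable def F (x : ℝ) : ℂ :=
  ∫ ξ in {p : ℝ × ℝ × ℝ |
      -1 < p.1 ∧ p.1 < p.2.1 ∧ p.2.1 < p.2.2 ∧ p.2.2 < 1},
    Complex.exp ((2 : ℂ) * (Real.pi : ℂ) * Complex.I * (x : ℂ) *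
      ((ξ.1 : ℂ) + (ξ.2.1 : ℂ) - 2 * (ξ.2.2 : ℂ)))

open Set Complex

section Fubini

variable {α β E : Type*} [MeasurableSpace α] [MeasurableSpace β] {μ : Measure α} {ν : Measure β}
  [SFinite μ] [SFinite ν] [NormedAddCommGroup E] [NormedSpace ℝ E]

theorem setIntegral_prod_setOf {s : Set α} {t : α → Set β} (hs : MeasurableSet s)
    (ht : MeasurableSet {p : α × β | p.2 ∈ t p.1}) {f : α × β → E}
    (hf : IntegrableOn f {p | p.1 ∈ s ∧ p.2 ∈ t p.1} (μ.prod ν)) :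
    ∫ p in {p | p.1 ∈ s ∧ p.2 ∈ t p.1}, f p ∂μ.prod ν = ∫ a in s, ∫ b in t a, f (a, b) ∂ν ∂μ := by
  have hst : MeasurableSet {p : α × β | p.1 ∈ s ∧ p.2 ∈ t p.1} := (measurable_fst hs).inter ht
  rw [← integral_indicator hst, integral_prod _ (hf.integrable_indicator hst),
    ← integral_indicator hs]
  congr 1 with a
  by_cases ha : a ∈ s
  · have hta : MeasurableSet (t a) := measurable_prodMk_left ht
    rw [indicator_of_mem ha, ← integral_indicator hta]
    congr 1 with b
    by_cases hb : b ∈ t a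
    · rw [indicator_of_mem (show (a, b) ∈ {p : α × β | p.1 ∈ s ∧ p.2 ∈ t p.1} from ⟨ha, hb⟩),
        indicator_of_mem hb]
    · rw [indicator_of_notMem (show (a, b) ∉ {p : α × β | p.1 ∈ s ∧ p.2 ∈ t p.1} from
        fun h ↦ hb h.2), indicator_of_notMem hb]
  · simp [indicator, ha]

end Fubini

theorem setIntegral_simplex {E : Type*} [NormedAddCommGroup E] [NormedSpace ℝ E]
    {f : ℝ × ℝ × ℝ → E} (hf : Continuous f) (lo hi : ℝ) :
    ∫ p in {p : ℝ × ℝ × ℝ | lo < p.1 ∧ p.1 < p.2.1 ∧ p.2.1 < p.2.2 ∧ p.2.2 < hi}, f p =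
      ∫ a in Ioo lo hi, ∫ b in Ioo a hi, ∫ c in Ioo b hi, f (a, b, c) := by
  have hregion : {p : ℝ × ℝ × ℝ | lo < p.1 ∧ p.1 < p.2.1 ∧ p.2.1 < p.2.2 ∧ p.2.2 < hi} =
      {p | p.1 ∈ Ioo lo hi ∧ p.2 ∈ {q : ℝ × ℝ | q.1 ∈ Ioo p.1 hi ∧ q.2 ∈ Ioo q.1 hi}} := by
    ext ⟨a, b, c⟩
    simp only [mem_ofPred_eq, mem_Ioo]
    constructor
    · rintro ⟨h₁, h₂, h₃, h₄⟩
      exact ⟨⟨h₁, by linarith⟩, ⟨h₂, by linarith⟩, h₃, h₄⟩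
    · rintro ⟨⟨h₁, -⟩, ⟨h₂, -⟩, h₃, h₄⟩
      exact ⟨h₁, h₂, h₃, h₄⟩
  rw [hregion, Measure.volume_eq_prod,
    setIntegral_prod_setOf (t := fun a ↦ {q : ℝ × ℝ | q.1 ∈ Ioo a hi ∧ q.2 ∈ Ioo q.1 hi})
      measurableSet_Ioo]
  · refine setIntegral_congr_fun measurableSet_Ioo fun a ha ↦ ?_
    rw [Measure.volume_eq_prod, setIntegral_prod_setOf (t := fun b ↦ Ioo b hi) measurableSet_Ioo]
    · exact (measurableSet_lt measurable_fst measurable_snd).inter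
        (measurableSet_lt measurable_snd measurable_const)
    · refine ((hf.comp (Continuous.prodMk_right a)).integrableOn_Icc
        (a := (a, a)) (b := (hi, hi))).mono_set ?_
      rintro ⟨b, c⟩ ⟨⟨hab, hb⟩, hbc, hc⟩
      exact ⟨⟨hab.le, by simp only; linarith⟩, hb.le, hc.le⟩
  · measurability
  · refine (hf.integrableOn_Icc (a := (lo, lo, lo)) (b := (hi, hi, hi))).mono_set ?_
    rintro ⟨a, b, c⟩ ⟨⟨hla, ha⟩, ⟨hab, hb⟩, hbc, hc⟩
    exact ⟨⟨hla.le, by simp only; linarith, by simp only; linarith⟩, ha.le, hb.le, hc.le⟩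

theorem setIntegral_Ioo_eq_sub_of_hasDerivAt {E : Type*} [NormedAddCommGroup E] [NormedSpace ℝ E]
    [CompleteSpace E] {f f' : ℝ → E} {a b : ℝ} (hab : a ≤ b)
    (hderiv : ∀ x ∈ Icc a b, HasDerivAt f (f' x) x) (hint : IntervalIntegrable f' volume a b) :
    ∫ x in Ioo a b, f' x = f b - f a := by
  rw [← integral_Ioc_eq_integral_Ioo, ← intervalIntegral.integral_of_le hab,
    intervalIntegral.integral_eq_sub_of_hasDerivAt (by rwa [uIcc_of_le hab]) hint]

theorem hasDerivAt_cexp_mul_add (k z : ℂ) (x : ℝ) :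
    HasDerivAt (fun t : ℝ ↦ cexp (k * t + z)) (cexp (k * x + z) * k) x := by
  simpa using (((hasDerivAt_id x).ofReal_comp.const_mul k).add_const z).cexp

theorem integral_Ioo_cexp_mul_add {k : ℂ} (hk : k ≠ 0) (z : ℂ) {p q : ℝ} (hpq : p ≤ q) :
    ∫ t in Ioo p q, cexp (k * t + z) = (cexp (k * q + z) - cexp (k * p + z)) / k := by
  rw [sub_div]
  refine setIntegral_Ioo_eq_sub_of_hasDerivAt hpq (f := fun t : ℝ ↦ cexp (k * t + z) / k)
    (fun t _ ↦ ?_) ((by fun_prop : Continuous fun t : ℝ ↦ cexp (k * t + z)).intervalIntegrable _ _)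
  simpa [hk] using (hasDerivAt_cexp_mul_add k z t).div_const k

section SimplexExponential

variable {u : ℂ}

theorem integral_Ioo_cexp_simplex_inner (hu : u ≠ 0) (a : ℝ) {b : ℝ} (hb : b ≤ 1) :
    ∫ c in Ioo b 1, cexp (u * (a + b - 2 * c)) =
      (cexp (-u * b + u * a) - cexp (u * b + u * (a - 2))) / (2 * u) := by
  have hshape : ∀ c : ℝ, u * (a + b - 2 * c) = -2 * u * c + u * (a + b) := fun c ↦ by ring
  simp_rw [hshape]
  rw [integral_Ioo_cexp_mul_add (by simpa using hu) _ hb,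
    show -2 * u * ((1 : ℝ) : ℂ) + u * (a + b) = u * b + u * (a - 2) by push_cast; ring,
    show -2 * u * b + u * (a + b) = -u * b + u * a by ring]
  field_simp
  ring

theorem integral_Ioo_cexp_simplex_middle (hu : u ≠ 0) {a : ℝ} (ha : a ≤ 1) :
    ∫ b in Ioo a 1, (cexp (-u * b + u * a) - cexp (u * b + u * (a - 2))) / (2 * u) =
      (1 - cexp (u * (a - 1))) ^ 2 / (2 * u ^ 2) := by
  refine (setIntegral_Ioo_eq_sub_of_hasDerivAt
    (f := fun b : ℝ ↦ (cexp (-u * b + u * a) + cexp (u * b + u * (a - 2))) / (-2 * u ^ 2)) ha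
    (fun b _ ↦ ?_) ((by fun_prop : Continuous _).intervalIntegrable _ _)).trans ?_
  · refine (((hasDerivAt_cexp_mul_add (-u) (u * a) b).fun_add
      (hasDerivAt_cexp_mul_add u (u * (a - 2)) b)).div_const (-2 * u ^ 2)).congr_deriv ?_
    field_simp
    ring
  · simp only [ofReal_one, mul_one]
    rw [show -u * a + u * a = 0 by ring, exp_zero, show -u + u * a = u * (a - 1) by ring,
      show u + u * (a - 2) = u * (a - 1) by ring,
      show u * a + u * (a - 2) = u * (a - 1) + u * (a - 1) by ring, exp_add]
    field_simp
    ring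

theorem integral_Ioo_cexp_simplex_outer (hu : u ≠ 0) :
    ∫ a in Ioo (-1 : ℝ) 1, (1 - cexp (u * (a - 1))) ^ 2 / (2 * u ^ 2) =
      1 / u ^ 2 - (3 - 4 * cexp (-2 * u) + cexp (-2 * u) ^ 2) / (4 * u ^ 3) := by
  have hE : ∀ t : ℝ, HasDerivAt (fun t : ℝ ↦ cexp (u * (t - 1))) (cexp (u * (t - 1)) * u) t :=
    fun t ↦ by simpa using (((hasDerivAt_id t).ofReal_comp.sub_const 1).const_mul u).cexp
  refine (setIntegral_Ioo_eq_sub_of_hasDerivAt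
    (f := fun a : ℝ ↦ (a - 2 * cexp (u * (a - 1)) / u + cexp (u * (a - 1)) ^ 2 / (2 * u))
      / (2 * u ^ 2)) (by norm_num)
    (fun a _ ↦ ?_) ((by fun_prop : Continuous _).intervalIntegrable _ _)).trans ?_
  · refine ((((hasDerivAt_id a).ofReal_comp.fun_sub ((hE a).const_mul 2 |>.div_const u)).fun_add
      (((hE a).fun_pow 2).div_const (2 * u))).div_const (2 * u ^ 2)).congr_deriv ?_
    field_simp
    push_cast
    ring
  · rw [show u * (((1 : ℝ) : ℂ) - 1) = 0 by push_cast; ring, exp_zero,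
      show u * (((-1 : ℝ) : ℂ) - 1) = -2 * u by push_cast; ring]
    field_simp
    push_cast
    ring

theorem integral_simplex_cexp (hu : u ≠ 0) :
    ∫ p in {p : ℝ × ℝ × ℝ | -1 < p.1 ∧ p.1 < p.2.1 ∧ p.2.1 < p.2.2 ∧ p.2.2 < 1},
      cexp (u * (p.1 + p.2.1 - 2 * p.2.2)) =
      1 / u ^ 2 - (3 - 4 * cexp (-2 * u) + cexp (-2 * u) ^ 2) / (4 * u ^ 3) := by
  rw [setIntegral_simplex (by fun_prop) (-1) 1, ← integral_Ioo_cexp_simplex_outer hu]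
  refine setIntegral_congr_fun measurableSet_Ioo fun a ha ↦ ?_
  rw [← integral_Ioo_cexp_simplex_middle hu ha.2.le]
  exact setIntegral_congr_fun measurableSet_Ioo fun b hb ↦
    integral_Ioo_cexp_simplex_inner hu a hb.2.le

theorem inv_two_mul_norm_sq_le_norm_integral_simplex (hre : u.re = 0) (hu : 4 ≤ ‖u‖) :
    1 / (2 * ‖u‖ ^ 2) ≤
      ‖∫ p in {p : ℝ × ℝ × ℝ | -1 < p.1 ∧ p.1 < p.2.1 ∧ p.2.1 < p.2.2 ∧ p.2.2 < 1},
        cexp (u * (p.1 + p.2.1 - 2 * p.2.2))‖ := by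
  have hu0 : 0 < ‖u‖ := by linarith
  rw [integral_simplex_cexp (norm_pos_iff.1 hu0)]
  have hw : ‖cexp (-2 * u)‖ = 1 := by simp [norm_exp, hre]
  have hnum : ‖3 - 4 * cexp (-2 * u) + cexp (-2 * u) ^ 2‖ ≤ 8 := by
    calc ‖3 - 4 * cexp (-2 * u) + cexp (-2 * u) ^ 2‖
        ≤ ‖(3 : ℂ)‖ + ‖4 * cexp (-2 * u)‖ + ‖cexp (-2 * u) ^ 2‖ :=
          (norm_add_le _ _).trans (by gcongr; exact norm_sub_le _ _)
      _ = 8 := by rw [norm_mul, norm_pow, hw]; norm_num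
  have hrem : ‖(3 - 4 * cexp (-2 * u) + cexp (-2 * u) ^ 2) / (4 * u ^ 3)‖ ≤ 2 / ‖u‖ ^ 3 := by
    rw [norm_div, norm_mul, norm_pow, show ‖(4 : ℂ)‖ = 4 by norm_num]
    calc _ ≤ 8 / (4 * ‖u‖ ^ 3) := by gcongr
      _ = 2 / ‖u‖ ^ 3 := by ring
  calc 1 / (2 * ‖u‖ ^ 2) ≤ 1 / ‖u‖ ^ 2 - 2 / ‖u‖ ^ 3 := by
        rw [div_sub_div _ _ (by positivity) (by positivity),
          div_le_div_iff₀ (by positivity) (by positivity)]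
        nlinarith [pow_pos hu0 5]
    _ ≤ ‖1 / u ^ 2‖ - ‖(3 - 4 * cexp (-2 * u) + cexp (-2 * u) ^ 2) / (4 * u ^ 3)‖ := by
        rw [norm_div, norm_one, norm_pow]
        linarith
    _ ≤ _ := norm_sub_norm_le _ _

end SimplexExponential

theorem div_sq_le_norm_F {x : ℝ} (hx : 1 ≤ x) : 1 / (8 * Real.pi ^ 2) / x ^ 2 ≤ ‖F x‖ := by
  have hnorm : ‖2 * Real.pi * I * x‖ = 2 * Real.pi * x := by
    simp [Real.pi_pos.le, abs_of_pos (zero_lt_one.trans_le hx)]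
  have hbound := inv_two_mul_norm_sq_le_norm_integral_simplex (u := 2 * Real.pi * I * x)
    (by simp) (by rw [hnorm]; nlinarith [Real.pi_gt_three])
  rw [hnorm] at hbound
  refine le_of_eq_of_le ?_ hbound
  field_simp
  ring

theorem lintegral_ofReal_inv_Ioi_eq_top {a : ℝ} (ha : 0 ≤ a) :
    ∫⁻ x in Ioi a, ENNReal.ofReal x⁻¹ = ⊤ := by
  by_contra h
  refine not_integrableOn_Ioi_inv ((lintegral_ofReal_ne_top_iff_integrable
    measurable_inv.aestronglyMeasurable ?_).1 h)
  filter_upwards [ae_restrict_mem measurableSet_Ioi] with x hx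
  exact inv_nonneg.2 (ha.trans hx.le)

theorem lintegral_rpow_norm_eq_top_of_div_sq_le_norm {E : Type*} [NormedAddCommGroup E]
    {f : ℝ → E} {c r : ℝ} (hc : 0 < c) (hr : 0 < r) (hr' : r ≤ 1 / 2)
    (hf : ∀ x, 1 ≤ x → c / x ^ 2 ≤ ‖f x‖) :
    ∫⁻ x, ENNReal.ofReal (‖f x‖ ^ r) = ⊤ := by
  have hpt : ∀ x ∈ Ioi (1 : ℝ), ENNReal.ofReal (c ^ r * x⁻¹) ≤ ENNReal.ofReal (‖f x‖ ^ r) := by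
    intro x hx
    have hx0 : 0 < x := one_pos.trans hx
    refine ENNReal.ofReal_le_ofReal ?_
    calc c ^ r * x⁻¹ ≤ c ^ r / x ^ (2 * r) := by
          rw [← div_eq_mul_inv]
          gcongr
          simpa using Real.rpow_le_rpow_of_exponent_le hx.le (by linarith : 2 * r ≤ 1)
      _ = (c / x ^ 2) ^ r := by
          rw [Real.div_rpow hc.le (by positivity), Real.rpow_mul hx0.le, Real.rpow_two]
      _ ≤ ‖f x‖ ^ r := Real.rpow_le_rpow (by positivity) (hf x hx.le) hr.le
  have hbelow : ∫⁻ x in Ioi (1 : ℝ), ENNReal.ofReal (c ^ r * x⁻¹) = ⊤ := by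
    simp_rw [ENNReal.ofReal_mul (Real.rpow_nonneg hc.le r)]
    rw [lintegral_const_mul _ measurable_inv.ennreal_ofReal,
      lintegral_ofReal_inv_Ioi_eq_top zero_le_one, ENNReal.mul_top (by positivity)]
  refine top_unique ?_
  calc ⊤ = ∫⁻ x in Ioi (1 : ℝ), ENNReal.ofReal (c ^ r * x⁻¹) := hbelow.symm
    _ ≤ ∫⁻ x in Ioi (1 : ℝ), ENNReal.ofReal (‖f x‖ ^ r) := setLIntegral_mono' measurableSet_Ioi hpt
    _ ≤ ∫⁻ x, ENNReal.ofReal (‖f x‖ ^ r) := setLIntegral_le_lintegral _ _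

/-- For `0 < r ≤ 1/2`, `F ∉ L^r(ℝ)`: `∫ |F|^r = ∞`. -/
theorem F_not_in_Lr (r : ℝ) (hr : 0 < r) (hr' : r ≤ 1/2) :
    ∫⁻ x : ℝ, ENNReal.ofReal (‖F x‖ ^ r) = ⊤ :=
  lintegral_rpow_norm_eq_top_of_div_sq_le_norm (by positivity) hr hr' fun _ ↦ div_sq_le_norm_F
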